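/- In the polynomial ring ℂ[k₁, k₂] with kᵢ = (aᵢ, bᵢ, cᵢ, dᵢ), the sequence (a₁d₁ - b₁c₁, a₂d₂ - b₂c₂, a₁d₂ - b₁c₂ + a₂d₁ - b₂c₁) is a regular sequence. -/

import Mathlib

/-!
Each ideal `(f₁)`, `(f₁, f₂)` is prime, and `f₂ ∉ (f₁)`, `f₃ ∉ (f₁, f₂)` (evaluate at a suitable
point), so each element is a nonzerodivisor modulo the previous ones. For primality, invert
`w = d₁` (resp. `w = d₁d₂`): the relations `aᵢdᵢ = bᵢcᵢ` then just solve for `aᵢ`, so the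
substitution `aᵢ ↦ bᵢcᵢ/dᵢ` into `ℂ[k₁,k₂][1/w]`, a domain, has the ideal as its kernel. This
needs `w` to be a nonzerodivisor modulo the ideal, which is checked by reducing a relation
`dᵢ g ∈ I` modulo `dᵢ`.
-/

open MvPolynomial

section Regular

variable {A : Type*} [CommRing A]

theorem Ideal.IsPrime.isSMulRegular_quotient {I : Ideal A} (hI : I.IsPrime) {f : A}
    (hf : f ∉ I) : IsSMulRegular (A ⧸ I) f :=
  (isSMulRegular_quotient_iff_mem_of_smul_mem I f).2 fun _ h ↦ (hI.mem_or_mem h).resolve_left hf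

theorem RingTheory.Sequence.isWeaklyRegular_of_isPrime {rs : List A}
    (h : ∀ i (hi : i < rs.length),
      (Ideal.ofList (rs.take i)).IsPrime ∧ rs[i] ∉ Ideal.ofList (rs.take i)) :
    IsWeaklyRegular A rs := by
  refine ⟨fun i hi ↦ ?_⟩
  rw [smul_eq_mul, Ideal.mul_top]
  exact (h i hi).1.isSMulRegular_quotient (h i hi).2

theorem ker_le_of_comp_eq_algebraMap {S : Type*} [CommRing S] {I : Ideal A} {w : A}
    (hw : IsSMulRegular (A ⧸ I) w) (φ : A →+* S)
    (ψ : S →+* Localization.Away (Ideal.Quotient.mk I w))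
    (h : ψ.comp φ = (algebraMap _ _).comp (Ideal.Quotient.mk I)) : RingHom.ker φ ≤ I := by
  intro g hg
  have : algebraMap _ (Localization.Away (Ideal.Quotient.mk I w)) (Ideal.Quotient.mk I g) = 0 := by
    rw [← RingHom.comp_apply, ← h, RingHom.comp_apply, RingHom.mem_ker.1 hg, map_zero]
  obtain ⟨⟨_, n, rfl⟩, hn⟩ :=
    (IsLocalization.map_eq_zero_iff (Submonoid.powers (Ideal.Quotient.mk I w)) _ _).1 this
  have hn : w ^ n * g ∈ I := by
    rwa [← Ideal.Quotient.eq_zero_iff_mem, map_mul, map_pow]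
  exact mem_of_isSMulRegular_quotient_of_smul_mem (hw.pow n) hn

end Regular

namespace MvPolynomial

variable {σ R : Type*} [CommRing R]

theorem notMem_of_le_ker_eval {I : Ideal (MvPolynomial σ R)} {x : σ → R}
    (hI : I ≤ RingHom.ker (eval x)) {p : MvPolynomial σ R} (hp : eval x p ≠ 0) : p ∉ I :=
  fun h ↦ hp (hI h)

theorem not_X_dvd_of_eval_ne_zero {x : σ → R} {i : σ} (hi : x i = 0) {p : MvPolynomial σ R}
    (hp : eval x p ≠ 0) : ¬ X i ∣ p := by
  rintro ⟨q, rfl⟩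
  simp [hi] at hp

theorem isSMulRegular_X_quotient_span_singleton [IsDomain R] {i : σ} {h : MvPolynomial σ R}
    (hi : ¬ X i ∣ h) :
    IsSMulRegular (MvPolynomial σ R ⧸ Ideal.span {h}) (X i : MvPolynomial σ R) := by
  refine (isSMulRegular_quotient_iff_mem_of_smul_mem _ _).2 fun g hg ↦ ?_
  simp only [smul_eq_mul, Ideal.mem_span_singleton] at hg ⊢
  exact (dvd_X_mul_iff.1 hg).resolve_right fun hXh ↦ hi hXh.1

section SubstDiv

variable {I : Ideal (MvPolynomial σ R)} {w : MvPolynomial σ R} {r : σ → MvPolynomial σ R}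

noncomputable def substDiv (w : MvPolynomial σ R) (r : σ → MvPolynomial σ R) :
    MvPolynomial σ R →ₐ[R] Localization.Away w :=
  aeval fun u ↦ algebraMap _ _ (r u) * IsLocalization.Away.invSelf w

/-- As `r u ≡ w * X u` modulo `I`, the map to the localization of the quotient by `I` at `w`
factors through the substitution. -/
theorem ker_substDiv_le (hw : IsSMulRegular (MvPolynomial σ R ⧸ I) w)
    (hr : ∀ u, w * X u - r u ∈ I) : RingHom.ker (substDiv w r) ≤ I := by
  set ρ := (algebraMap (MvPolynomial σ R ⧸ I) (Localization.Away (Ideal.Quotient.mk I w))).comp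
    (Ideal.Quotient.mk I)
  have hρw : IsUnit (ρ w) := IsLocalization.Away.algebraMap_isUnit (Ideal.Quotient.mk I w)
  refine ker_le_of_comp_eq_algebraMap hw (substDiv w r).toRingHom
    (IsLocalization.Away.lift w hρw) (MvPolynomial.ringHom_ext (fun c ↦ ?_) fun u ↦ ?_)
  · simp [substDiv, IsScalarTower.algebraMap_apply R (MvPolynomial σ R) (Localization.Away w),
      IsLocalization.Away.lift_eq, ρ]
  · have hu : ρ (r u) = ρ w * ρ (X u) := by
      rw [← map_mul, eq_comm, ← sub_eq_zero, ← map_sub, RingHom.comp_apply,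
        Ideal.Quotient.eq_zero_iff_mem.2 (hr u), map_zero]
    have hinv : ρ w * IsLocalization.Away.lift w hρw
        (IsLocalization.Away.invSelf (S := Localization.Away w) w) = 1 := by
      rw [← IsLocalization.Away.lift_eq (S := Localization.Away w) w hρw, ← map_mul,
        IsLocalization.Away.mul_invSelf, map_one]
    simp only [substDiv, AlgHom.toRingHom_eq_coe, RingHom.coe_comp, RingHom.coe_coe,
      Function.comp_apply, aeval_X, map_mul, IsLocalization.Away.lift_eq, hu]
    rw [mul_right_comm, hinv, one_mul]
    rfl

theorem isPrime_of_le_ker_substDiv [IsDomain R] (hw0 : w ≠ 0)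
    (hw : IsSMulRegular (MvPolynomial σ R ⧸ I) w) (hr : ∀ u, w * X u - r u ∈ I)
    (hI : I ≤ RingHom.ker (substDiv w r)) : I.IsPrime := by
  have := IsLocalization.Away.isDomain (S := Localization.Away w) hw0
  rw [le_antisymm hI (ker_substDiv_le hw hr)]
  exact RingHom.ker_isPrime _

end SubstDiv

variable [DecidableEq σ]

variable (R) in
noncomputable def substZero (v : σ) : MvPolynomial σ R →ₐ[R] MvPolynomial σ R :=
  aeval (Function.update X v 0)

@[simp]
theorem substZero_X (v i : σ) : substZero R v (X i) = if i = v then 0 else X i := by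
  simp [substZero, Function.update_apply]

theorem X_dvd_sub_substZero (v : σ) (p : MvPolynomial σ R) : X v ∣ p - substZero R v p := by
  induction p using MvPolynomial.induction_on with
  | C a => simp
  | add p q hp hq => simpa [add_sub_add_comm] using dvd_add hp hq
  | mul_X p j hp =>
    by_cases hj : j = v
    · subst hj
      simp
    · simpa [hj, ← sub_mul] using hp.mul_right (X j)

/-- Setting `X v = 0` in `X v * g = p * (a * X v - m) + j` gives `m * p₀ ∈ J` for the
reduction `p₀` of `p`, so `p₀ ∈ J`; as `X v ∣ p - p₀`, cancelling `X v` modulo `J` is then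
possible. -/
theorem isSMulRegular_X_quotient_span_sup {v : σ} {a m : MvPolynomial σ R}
    {J : Ideal (MvPolynomial σ R)} (hm : substZero R v m = m)
    (hJ : ∀ j ∈ J, substZero R v j ∈ J) (hmJ : IsSMulRegular (MvPolynomial σ R ⧸ J) m)
    (hvJ : IsSMulRegular (MvPolynomial σ R ⧸ J) (X v : MvPolynomial σ R)) :
    IsSMulRegular (MvPolynomial σ R ⧸ (Ideal.span {a * X v - m} ⊔ J))
      (X v : MvPolynomial σ R) := by
  rw [isSMulRegular_quotient_iff_mem_of_smul_mem] at hmJ hvJ ⊢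
  intro g hg
  obtain ⟨_, hy, j, hj, hsum⟩ := Submodule.mem_sup.1 hg
  obtain ⟨p, rfl⟩ := Ideal.mem_span_singleton'.1 hy
  rw [smul_eq_mul] at hsum
  have hp₀ : substZero R v p ∈ J := hmJ _ <| by
    have := congrArg (substZero R v) hsum
    simp only [map_add, map_mul, substZero_X, ite_true, mul_zero, map_sub, zero_sub, hm] at this
    rw [smul_eq_mul, show m * substZero R v p = substZero R v j by linear_combination -this]
    exact hJ j hj
  obtain ⟨p', hp'⟩ := X_dvd_sub_substZero v p
  have hrest : g - a * substZero R v p - p' * (a * X v - m) ∈ J := hvJ _ <| by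
    rw [smul_eq_mul, show X v * (g - a * substZero R v p - p' * (a * X v - m))
      = j - m * substZero R v p by linear_combination -hsum + (a * X v - m) * hp']
    exact J.sub_mem hj (J.mul_mem_left m hp₀)
  rw [show g = p' * (a * X v - m) +
    (a * substZero R v p + (g - a * substZero R v p - p' * (a * X v - m))) by ring]
  exact Submodule.add_mem_sup (Ideal.mul_mem_left _ _ (Ideal.mem_span_singleton_self _))
    (J.add_mem (J.mul_mem_left a hp₀) hrest)

end MvPolynomial

section Minors

variable (R : Type*) [CommRing R]

/-- With `kᵢ = (aᵢ, bᵢ, cᵢ, dᵢ) = (X (i, 0), …, X (i, 3))`, this is `aᵢ d_j - bᵢ c_j`; the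
sequence of the theorem is `minor 0 0, minor 1 1, minor 0 1 + minor 1 0`. -/
noncomputable def minor (i j : Fin 2) : MvPolynomial (Fin 2 × Fin 4) R :=
  X (i, 0) * X (j, 3) - X (i, 1) * X (j, 2)

variable {R}

theorem substZero_minor_of_ne {i j : Fin 2} (hij : i ≠ j) (k : Fin 4) :
    substZero R (j, k) (minor R i i) = minor R i i := by
  simp [minor, hij]

variable [IsDomain R]

theorem not_X_dvd_minor_of_ne {i j : Fin 2} (hij : i ≠ j) (k : Fin 4) :
    ¬ X (j, k) ∣ minor R i i :=
  not_X_dvd_of_eval_ne_zero (x := fun u ↦ if u = (i, 0) ∨ u = (i, 3) then 1 else 0)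
    (by simp [hij.symm]) (by simp [minor])

theorem isSMulRegular_X_quotient_minor (i : Fin 2) :
    IsSMulRegular (MvPolynomial (Fin 2 × Fin 4) R ⧸ Ideal.span {minor R i i})
      (X (i, 3) : MvPolynomial (Fin 2 × Fin 4) R) := by
  have hreg {p : MvPolynomial (Fin 2 × Fin 4) R} (hp : p ≠ 0) :
      IsSMulRegular (MvPolynomial (Fin 2 × Fin 4) R ⧸ (⊥ : Ideal _)) p :=
    Ideal.isPrime_bot.isSMulRegular_quotient (by simpa using hp)
  have h := isSMulRegular_X_quotient_span_sup (v := (i, 3)) (a := X (i, 0))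
    (m := X (i, 1) * X (i, 2)) (by simp) (by simp)
    (hreg (mul_ne_zero (X_ne_zero _) (X_ne_zero _))) (hreg (X_ne_zero _))
  rwa [sup_bot_eq] at h

theorem isSMulRegular_X_quotient_minor_sup {i j : Fin 2} (hij : i ≠ j) :
    IsSMulRegular (MvPolynomial (Fin 2 × Fin 4) R ⧸
      (Ideal.span {minor R i i} ⊔ Ideal.span {minor R j j}))
      (X (i, 3) : MvPolynomial (Fin 2 × Fin 4) R) := by
  have hreg (k : Fin 4) :=
    isSMulRegular_X_quotient_span_singleton (not_X_dvd_minor_of_ne (R := R) hij.symm k)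
  refine isSMulRegular_X_quotient_span_sup (v := (i, 3)) (a := X (i, 0))
    (m := X (i, 1) * X (i, 2)) (by simp) (fun p hp ↦ ?_) ((hreg 1).mul (hreg 2)) (hreg 3)
  obtain ⟨q, rfl⟩ := Ideal.mem_span_singleton'.1 hp
  rw [map_mul, substZero_minor_of_ne hij.symm]
  exact Ideal.mul_mem_left _ _ (Ideal.mem_span_singleton_self _)

theorem isPrime_span_minor (i : Fin 2) : (Ideal.span {minor R i i}).IsPrime := by
  refine isPrime_of_le_ker_substDiv (w := X (i, 3))
    (r := Function.update (fun u ↦ X (i, 3) * X u) (i, 0) (X (i, 1) * X (i, 2))) (X_ne_zero _)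
    (isSMulRegular_X_quotient_minor i) (fun u ↦ ?_) ?_
  · by_cases hu : u = (i, 0)
    · rw [hu, Function.update_self]
      convert Ideal.mem_span_singleton_self (minor R i i) using 1
      rw [minor]
      ring
    · simp [hu]
  · rw [Ideal.span_le, Set.singleton_subset_iff, SetLike.mem_coe, RingHom.mem_ker]
    simp [substDiv, minor, Function.update_apply]
    ring

theorem isPrime_span_minor_sup :
    (Ideal.span {minor R 0 0} ⊔ Ideal.span {minor R 1 1}).IsPrime := by
  refine isPrime_of_le_ker_substDiv (w := X (0, 3) * X (1, 3))
    (r := Function.update (Function.update (fun u ↦ X (0, 3) * X (1, 3) * X u)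
      (0, 0) (X (0, 1) * X (0, 2) * X (1, 3))) (1, 0) (X (1, 1) * X (1, 2) * X (0, 3)))
    (mul_ne_zero (X_ne_zero _) (X_ne_zero _))
    ((isSMulRegular_X_quotient_minor_sup zero_ne_one).mul
      (sup_comm (Ideal.span {minor R 0 0}) _ ▸ isSMulRegular_X_quotient_minor_sup one_ne_zero))
    (fun u ↦ ?_) ?_
  · by_cases hu₁ : u = (1, 0)
    · rw [hu₁, Function.update_self]
      refine Ideal.mem_sup_right ?_
      convert Ideal.mul_mem_left _ (X (0, 3)) (Ideal.mem_span_singleton_self (minor R 1 1))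
        using 1
      rw [minor]
      ring
    by_cases hu₀ : u = (0, 0)
    · rw [hu₀, Function.update_of_ne (by decide), Function.update_self]
      refine Ideal.mem_sup_left ?_
      convert Ideal.mul_mem_left _ (X (1, 3)) (Ideal.mem_span_singleton_self (minor R 0 0))
        using 1
      rw [minor]
      ring
    · simp [hu₀, hu₁]
  · refine sup_le ?_ ?_ <;>
    · rw [Ideal.span_le, Set.singleton_subset_iff, SetLike.mem_coe, RingHom.mem_ker]
      simp [substDiv, minor, Function.update_apply]
      ring

theorem minor_zero_zero_notMem_bot : minor R 0 0 ∉ (⊥ : Ideal _) :=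
  notMem_of_le_ker_eval (x := fun u ↦ if u = (0, 0) ∨ u = (0, 3) then 1 else 0) bot_le
    (by simp [minor])

theorem minor_one_one_notMem : minor R 1 1 ∉ Ideal.span {minor R 0 0} :=
  notMem_of_le_ker_eval (x := fun u ↦ if u = (1, 0) ∨ u = (1, 3) then 1 else 0)
    (by simp [Ideal.span_le, minor]) (by simp [minor])

theorem minor_zero_one_add_minor_one_zero_notMem :
    minor R 0 1 + minor R 1 0 ∉ Ideal.span {minor R 0 0} ⊔ Ideal.span {minor R 1 1} :=
  notMem_of_le_ker_eval (x := fun u ↦ if u = (0, 0) ∨ u = (1, 3) then 1 else 0)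
    (by simp [Ideal.span_le, minor]) (by simp [minor])

theorem isWeaklyRegular_minors :
    RingTheory.Sequence.IsWeaklyRegular (MvPolynomial (Fin 2 × Fin 4) R)
      [minor R 0 0, minor R 1 1, minor R 0 1 + minor R 1 0] := by
  refine RingTheory.Sequence.isWeaklyRegular_of_isPrime fun i hi ↦ ?_
  simp only [List.length_cons, List.length_nil] at hi
  interval_cases i
  · simp only [List.take_zero, Ideal.ofList_nil]
    exact ⟨Ideal.isPrime_bot, minor_zero_zero_notMem_bot⟩
  · simp only [List.take, Ideal.ofList_singleton]
    exact ⟨isPrime_span_minor 0, minor_one_one_notMem⟩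
  · simp only [List.take, Ideal.ofList_cons, Ideal.ofList_nil, sup_bot_eq]
    exact ⟨isPrime_span_minor_sup, minor_zero_one_add_minor_one_zero_notMem⟩

end Minors

theorem stmt_10 :
    RingTheory.Sequence.IsWeaklyRegular (MvPolynomial (Fin 2 × Fin 4) ℂ)
      ([X (0, 0) * X (0, 3) - X (0, 1) * X (0, 2),
        X (1, 0) * X (1, 3) - X (1, 1) * X (1, 2),
        X (0, 0) * X (1, 3) - X (0, 1) * X (1, 2) + X (1, 0) * X (0, 3) - X (1, 1) * X (0, 2)] :
        List (MvPolynomial (Fin 2 × Fin 4) ℂ)) := by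
  convert isWeaklyRegular_minors (R := ℂ) using 4 <;> simp only [minor]
  ring
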